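/- Let A ∈ ℝ^{m×n} (m < n) and M ∈ ℝ^{m×q} (m ≤ q) with rank(A) = rank(M) = m, let y ∈ ℝ^m and τ > 0, and suppose Aᵀ satisfies the weak RSP of order k. Then for any fixed constant δ ∈ (0, τ) there exist a constant γ̄ > 0 and a positive integer n̂, depending only on (A, M, y, τ, φ, δ), such that for every x ∈ ℝⁿ there exists an optimal solution x* of the nonlinear Dantzig selector problem min{‖z‖₁ : φ(Mᵀ(Az − y)) ≤ τ} satisfying ‖x − x*‖₂ ≤ δ + 2γ̄·{ n̂·(φ(Mᵀ(Ax − y)) − τ)⁺ + 2σ_k(x)₁ + cτ + c·φ(Mᵀ(Ax − y)) }. In particular, for every x with φ(Mᵀ(Ax − y)) ≤ τ, ‖x − x*‖₂ ≤ δ + 2γ̄·{ 2σ_k(x)₁ + cτ + c·φ(Mᵀ(Ax − y)) } ≤ δ + 4γ̄·{ σ_k(x)₁ + cτ }. -/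

import Mathlib

open Matrix
open scoped Classical

/-- The ℓ₁ norm on `Fin n → ℝ`. -/
noncomputable def l1norm {n : ℕ} (x : Fin n → ℝ) : ℝ := ∑ i, |x i|

/-- The Euclidean (ℓ₂) norm on `Fin n → ℝ`. -/
noncomputable def l2norm {n : ℕ} (x : Fin n → ℝ) : ℝ := Real.sqrt (∑ i, (x i) ^ 2)

/-- The ℓ_∞ norm on `Fin n → ℝ`. -/
noncomputable def linfnorm {n : ℕ} (x : Fin n → ℝ) : ℝ := ⨆ i, |x i|

/-- The best `k`-term approximation error `σ_k(x)₁`. -/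
noncomputable def bestKTerm {n : ℕ} (k : ℕ) (x : Fin n → ℝ) : ℝ :=
  sInf {t : ℝ | ∃ u : Fin n → ℝ,
    (Finset.univ.filter (fun i => u i ≠ 0)).card ≤ k ∧ t = l1norm (x - u)}

/-- `Aᵀ` satisfies the weak range space property of order `k`. -/
def WeakRSP {m n : ℕ} (A : Matrix (Fin m) (Fin n) ℝ) (k : ℕ) : Prop :=
  ∀ S₁ S₂ : Finset (Fin n), Disjoint S₁ S₂ → S₁.card + S₂.card ≤ k →
    ∃ u : Fin m → ℝ,
      (∀ i ∈ S₁, Aᵀ.mulVec u i = 1) ∧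
      (∀ i ∈ S₂, Aᵀ.mulVec u i = -1) ∧
      (∀ i, i ∉ S₁ → i ∉ S₂ → |Aᵀ.mulVec u i| ≤ 1)

/-- The induced `∞→1` operator norm. -/
noncomputable def opNormInfToOne {a b : ℕ} (Q : Matrix (Fin a) (Fin b) ℝ) : ℝ :=
  sSup {t : ℝ | ∃ x : Fin b → ℝ, linfnorm x ≤ 1 ∧ t = l1norm (Q.mulVec x)}

/-- The constant `c` of Theorem 3.2. -/
noncomputable def cConst {m n q : ℕ} (M : Matrix (Fin m) (Fin q) ℝ)
    (A : Matrix (Fin m) (Fin n) ℝ) : ℝ :=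
  sSup {t : ℝ | ∃ g : Fin m → Fin q, Function.Injective g ∧
    IsUnit (M.submatrix id g) ∧
    t = opNormInfToOne ((M.submatrix id g)⁻¹ * (A * Aᵀ)⁻¹ * A)}

/-- `φ` is a norm on `Fin q → ℝ`. -/
structure IsNorm {q : ℕ} (φ : (Fin q → ℝ) → ℝ) : Prop where
  nonneg : ∀ x, 0 ≤ φ x
  eq_zero_iff : ∀ x, φ x = 0 ↔ x = 0
  smul_eq : ∀ (c : ℝ) (x), φ (c • x) = |c| * φ x
  triangle : ∀ x y, φ (x + y) ≤ φ x + φ y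

/-- The dual norm `φ*(u) = sup {uᵀx : φ(x) ≤ 1}`. -/
noncomputable def dualNorm {q : ℕ} (φ : (Fin q → ℝ) → ℝ) (u : Fin q → ℝ) : ℝ :=
  sSup {t : ℝ | ∃ x : Fin q → ℝ, φ x ≤ 1 ∧ t = ∑ i, u i * x i}

/-- The `i`-th standard basis vector of `ℝ^q`. -/
def stdBasis {q : ℕ} (i : Fin q) : Fin q → ℝ := fun j => if j = i then 1 else 0

/-!
For every sign pattern of a `k`-sparse vector `v`, the weak RSP provides `u` with `Aᵀ u` equal to
`sign v` on the support, so `‖v‖₁ = ⟪u, A v⟫`; as there are finitely many sign patterns,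
`‖v‖₁ ≤ C ‖A v‖` on `k`-sparse vectors. Writing `x = (x - u) + u` with `u` a near-best `k`-term
approximation, and bounding the residual `A x - y` by `φ(Mᵀ(A x - y))` (`Mᵀ` is injective and
`φ*(eᵢ) = 1` makes `φ` dominate the sup norm), gives
`‖x‖₁ ≤ K (σ_k(x)₁ + φ(Mᵀ(A x - y)) + 1)`. Fix one minimizer `x*`, which exists because `‖·‖₁` is
coercive on the closed feasible set. If `m > 0` then `c > 0`, so the constant `K + ‖x*‖₁` is
absorbed into a multiple of `c τ`. If `m = 0` the weak RSP forces `k = 0`, and then `x* = 0` and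
`σ₀(x)₁ = ‖x‖₁`.
-/

section Norms

variable {n : ℕ}

lemma l1norm_nonneg (x : Fin n → ℝ) : 0 ≤ l1norm x :=
  Finset.sum_nonneg fun i _ => abs_nonneg (x i)

lemma abs_le_l1norm (x : Fin n → ℝ) (i : Fin n) : |x i| ≤ l1norm x :=
  Finset.single_le_sum (f := fun j => |x j|) (fun j _ => abs_nonneg (x j)) (Finset.mem_univ i)

lemma l1norm_add_le (x z : Fin n → ℝ) : l1norm (x + z) ≤ l1norm x + l1norm z := by
  unfold l1norm
  rw [← Finset.sum_add_distrib]
  exact Finset.sum_le_sum fun i _ => abs_add_le (x i) (z i)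

lemma l1norm_sub_le (x z : Fin n → ℝ) : l1norm (x - z) ≤ l1norm x + l1norm z := by
  have hneg : l1norm (-z) = l1norm z := by simp [l1norm]
  simpa [sub_eq_add_neg, hneg] using l1norm_add_le x (-z)

lemma norm_le_l1norm (x : Fin n → ℝ) : ‖x‖ ≤ l1norm x :=
  (pi_norm_le_iff_of_nonneg (l1norm_nonneg x)).2 fun i => abs_le_l1norm x i

lemma l1norm_le_card_mul_norm (x : Fin n → ℝ) : l1norm x ≤ n * ‖x‖ :=
  calc l1norm x ≤ ∑ _i : Fin n, ‖x‖ := Finset.sum_le_sum fun i _ => norm_le_pi_norm x i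
    _ = n * ‖x‖ := by simp

lemma l2norm_le_l1norm (x : Fin n → ℝ) : l2norm x ≤ l1norm x := by
  rw [l2norm, Real.sqrt_le_left (l1norm_nonneg x), l1norm]
  simpa using Finset.sum_sq_le_sq_sum_of_nonneg (s := Finset.univ) (f := fun i => |x i|)
    fun i _ => abs_nonneg (x i)

lemma abs_dotProduct_le (u w : Fin n → ℝ) : |u ⬝ᵥ w| ≤ l1norm u * ‖w‖ :=
  calc |u ⬝ᵥ w| ≤ ∑ i, |u i * w i| := Finset.abs_sum_le_sum_abs _ _
    _ ≤ ∑ i, |u i| * ‖w‖ := by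
        gcongr with i
        rw [abs_mul]
        exact mul_le_mul_of_nonneg_left (norm_le_pi_norm w i) (abs_nonneg _)
    _ = l1norm u * ‖w‖ := (Finset.sum_mul _ _ _).symm

lemma l1norm_eq_dotProduct {ζ v : Fin n → ℝ} (hpos : ∀ i, 0 < v i → ζ i = 1)
    (hneg : ∀ i, v i < 0 → ζ i = -1) : l1norm v = ζ ⬝ᵥ v := by
  refine Finset.sum_congr rfl fun i _ => ?_
  rcases lt_trichotomy (v i) 0 with h | h | h
  · simp [hneg i h, abs_of_neg h]
  · simp [h]
  · simp [hpos i h, abs_of_pos h]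

end Norms

namespace IsNorm

variable {q : ℕ} {φ : (Fin q → ℝ) → ℝ}

lemma map_zero (hφ : IsNorm φ) : φ 0 = 0 := (hφ.eq_zero_iff 0).2 rfl

lemma map_neg (hφ : IsNorm φ) (x : Fin q → ℝ) : φ (-x) = φ x := by
  simpa using hφ.smul_eq (-1) x

lemma abs_sub_le (hφ : IsNorm φ) (a b : Fin q → ℝ) : |φ a - φ b| ≤ φ (a - b) := by
  have ha : φ a ≤ φ (a - b) + φ b := by simpa using hφ.triangle (a - b) b
  have hb : φ b ≤ φ (a - b) + φ a := by
    simpa [← hφ.map_neg (a - b)] using hφ.triangle (b - a) a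
  exact abs_sub_le_iff.2 ⟨by linarith, by linarith⟩

lemma le_l1norm (hφ : IsNorm φ) (hbasis : ∀ i, φ (stdBasis i) = 1) (x : Fin q → ℝ) :
    φ x ≤ l1norm x := by
  have hx : x = ∑ i, x i • stdBasis i := by
    ext j
    simp [_root_.stdBasis]
  calc φ x = φ (∑ i, x i • stdBasis i) := congrArg φ hx
    _ ≤ ∑ i, φ (x i • stdBasis i) :=
        Finset.le_sum_of_subadditive φ hφ.map_zero.le hφ.triangle _ _
    _ = l1norm x := by simp [hφ.smul_eq, hbasis, l1norm]

lemma continuous (hφ : IsNorm φ) (hbasis : ∀ i, φ (stdBasis i) = 1) : Continuous φ := by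
  refine (LipschitzWith.of_dist_le_mul (K := q) fun a b => ?_).continuous
  calc dist (φ a) (φ b) ≤ φ (a - b) := hφ.abs_sub_le a b
    _ ≤ q * ‖a - b‖ := (hφ.le_l1norm hbasis _).trans (l1norm_le_card_mul_norm _)
    _ = _ := by simp [dist_eq_norm]

lemma dotProduct_le (hφ : IsNorm φ) {u : Fin q → ℝ} (hu : 0 < dualNorm φ u) (v : Fin q → ℝ) :
    u ⬝ᵥ v ≤ dualNorm φ u * φ v := by
  have hbdd : BddAbove {t : ℝ | ∃ x : Fin q → ℝ, φ x ≤ 1 ∧ t = ∑ i, u i * x i} := by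
    by_contra h
    rw [dualNorm, Real.sSup_of_not_bddAbove h] at hu
    exact lt_irrefl 0 hu
  rcases (hφ.nonneg v).eq_or_lt with h0 | hpos
  · simp [(hφ.eq_zero_iff v).1 h0.symm, hφ.map_zero]
  · have hunit : φ ((φ v)⁻¹ • v) ≤ 1 := by
      rw [hφ.smul_eq, abs_inv, abs_of_pos hpos, inv_mul_cancel₀ hpos.ne']
    have h := le_csSup hbdd ⟨_, hunit, rfl⟩
    rw [← dualNorm] at h
    change u ⬝ᵥ ((φ v)⁻¹ • v) ≤ dualNorm φ u at h
    rwa [dotProduct_smul, smul_eq_mul, inv_mul_le_iff₀ hpos, mul_comm] at h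

lemma norm_le (hφ : IsNorm φ) (hdbasis : ∀ i, dualNorm φ (stdBasis i) = 1) (x : Fin q → ℝ) :
    ‖x‖ ≤ φ x := by
  have hcoord : ∀ i v, v i ≤ φ v := fun i v => by
    simpa [hdbasis i, _root_.stdBasis, dotProduct] using
      hφ.dotProduct_le (u := stdBasis i) (by rw [hdbasis i]; exact one_pos) v
  refine (pi_norm_le_iff_of_nonneg (hφ.nonneg x)).2 fun i => abs_le.2 ⟨?_, hcoord i x⟩
  have h := hcoord i (-x)
  rw [hφ.map_neg, Pi.neg_apply] at h
  linarith

end IsNorm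

namespace Matrix

section Rank

variable {K : Type*} [Field K] {ι κ : Type*} [Fintype κ]

lemma mulVec_surjective_of_rank_eq [Fintype ι] (A : Matrix ι κ K) (h : A.rank = Fintype.card ι) :
    Function.Surjective A.mulVec := by
  have : LinearMap.range A.mulVecLin = ⊤ := Submodule.eq_top_of_finrank_eq <| by
    rw [Module.finrank_fintype_fun_eq_card]
    exact h
  exact LinearMap.range_eq_top.1 this

lemma mulVec_injective_of_rank_eq (A : Matrix ι κ K) (h : A.rank = Fintype.card κ) :
    Function.Injective A.mulVec := by
  rw [mulVec_injective_iff, linearIndependent_iff_card_eq_finrank_span, ← h,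
    rank_eq_finrank_span_cols, Set.finrank]

lemma exists_isUnit_submatrix_of_rank_eq [Fintype ι] [DecidableEq ι] (M : Matrix ι κ K)
    (h : M.rank = Fintype.card ι) :
    ∃ g : ι → κ, Function.Injective g ∧ IsUnit (M.submatrix id g) := by
  obtain ⟨s, a, ha, hspan, hli⟩ := exists_linearIndependent' K M.col
  have : Fintype s := Fintype.ofInjective a ha
  have hcard : Fintype.card ι = Fintype.card s := by
    rw [← h, rank_eq_finrank_span_cols, ← hspan, finrank_span_eq_card hli]
  let e := Fintype.equivOfCardEq hcard
  refine ⟨a ∘ e, ha.comp e.injective, ?_⟩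
  rw [← linearIndependent_cols_iff_isUnit]
  exact hli.comp e e.injective

end Rank

variable {ι κ : Type*} [Fintype ι] [Fintype κ]

lemma exists_norm_mulVec_le (A : Matrix ι κ ℝ) :
    ∃ C, 0 ≤ C ∧ ∀ v, ‖A *ᵥ v‖ ≤ C * ‖v‖ :=
  let f := LinearMap.toContinuousLinearMap A.mulVecLin
  ⟨‖f‖, norm_nonneg f, f.le_opNorm⟩

lemma exists_norm_le_mul_norm_mulVec (B : Matrix ι κ ℝ) (hB : Function.Injective B.mulVec) :
    ∃ C, 0 ≤ C ∧ ∀ w, ‖w‖ ≤ C * ‖B *ᵥ w‖ := by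
  obtain ⟨C, -, hC⟩ := B.mulVecLin.injective_iff_antilipschitz.1 hB
  exact ⟨C, C.2, hC.le_mul_norm (by simp)⟩

end Matrix

section BestKTerm

variable {n : ℕ} (k : ℕ) (x : Fin n → ℝ)

lemma bestKTerm_nonneg : 0 ≤ bestKTerm k x :=
  Real.sInf_nonneg fun _ ⟨u, _, ht⟩ => ht ▸ l1norm_nonneg (x - u)

lemma exists_l1norm_sub_lt_bestKTerm {ε : ℝ} (hε : 0 < ε) :
    ∃ u : Fin n → ℝ, (Finset.univ.filter (fun i => u i ≠ 0)).card ≤ k ∧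
      l1norm (x - u) < bestKTerm k x + ε := by
  obtain ⟨t, ⟨u, hu, rfl⟩, hlt⟩ := Real.lt_sInf_add_pos (s := {t : ℝ | ∃ u : Fin n → ℝ,
    (Finset.univ.filter (fun i => u i ≠ 0)).card ≤ k ∧ t = l1norm (x - u)}) ⟨_, 0, by simp, rfl⟩ hε
  exact ⟨u, hu, hlt⟩

lemma bestKTerm_zero : bestKTerm 0 x = l1norm x := by
  have hzero : ∀ u : Fin n → ℝ, (Finset.univ.filter (fun i => u i ≠ 0)).card ≤ 0 → u = 0 :=
    fun u hu => by
      ext i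
      simpa using Finset.filter_eq_empty_iff.1 (Finset.card_eq_zero.1 (Nat.le_zero.1 hu))
        (Finset.mem_univ i)
  refine le_antisymm (csInf_le ⟨0, fun _ ⟨u, _, ht⟩ => ht ▸ l1norm_nonneg _⟩ ⟨0, by simp, by simp⟩)
    (le_csInf ⟨_, 0, by simp, rfl⟩ ?_)
  rintro _ ⟨u, hu, rfl⟩
  simp [hzero u hu]

end BestKTerm

section WeakRSP

variable {m n k : ℕ} {A : Matrix (Fin m) (Fin n) ℝ}

lemma WeakRSP.rows_pos (hA : WeakRSP A k) (hk : 0 < k) (hn : 0 < n) : 0 < m := by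
  obtain ⟨u, hu, -, -⟩ := hA {⟨0, hn⟩} ∅ (Finset.disjoint_empty_right _)
    (by simpa [Nat.one_le_iff_ne_zero] using hk.ne')
  by_contra hm
  obtain rfl : m = 0 := by omega
  simpa [Matrix.mulVec, dotProduct] using hu ⟨0, hn⟩ (Finset.mem_singleton_self _)

lemma WeakRSP.exists_l1norm_le_mul_norm_mulVec (hA : WeakRSP A k) :
    ∃ C, 0 ≤ C ∧ ∀ v : Fin n → ℝ, (Finset.univ.filter (fun i => v i ≠ 0)).card ≤ k →
      l1norm v ≤ C * ‖A *ᵥ v‖ := by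
  have hcert : ∀ S : Finset (Fin n) × Finset (Fin n), ∃ u : Fin m → ℝ,
      Disjoint S.1 S.2 → S.1.card + S.2.card ≤ k →
        (∀ i ∈ S.1, (Aᵀ *ᵥ u) i = 1) ∧ (∀ i ∈ S.2, (Aᵀ *ᵥ u) i = -1) := by
    intro S
    by_cases hS : Disjoint S.1 S.2 ∧ S.1.card + S.2.card ≤ k
    · obtain ⟨u, h₁, h₂, -⟩ := hA S.1 S.2 hS.1 hS.2
      exact ⟨u, fun _ _ => ⟨h₁, h₂⟩⟩
    · exact ⟨0, fun h₁ h₂ => absurd ⟨h₁, h₂⟩ hS⟩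
  choose U hU using hcert
  refine ⟨∑ S, l1norm (U S), Finset.sum_nonneg fun S _ => l1norm_nonneg _, fun v hv => ?_⟩
  set S₁ := Finset.univ.filter (fun i => 0 < v i)
  set S₂ := Finset.univ.filter (fun i => v i < 0)
  have hdisj : Disjoint S₁ S₂ := Finset.disjoint_filter.2 fun i _ h₁ h₂ => h₁.not_gt h₂
  have hcard : S₁.card + S₂.card ≤ k := by
    rw [← Finset.card_union_of_disjoint hdisj]
    refine (Finset.card_le_card fun i hi => ?_).trans hv
    simp only [S₁, S₂, Finset.mem_union, Finset.mem_filter, Finset.mem_univ, true_and] at hi ⊢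
    rcases hi with h | h
    · exact h.ne'
    · exact h.ne
  obtain ⟨h₁, h₂⟩ := hU (S₁, S₂) hdisj hcard
  calc l1norm v = (Aᵀ *ᵥ U (S₁, S₂)) ⬝ᵥ v :=
        l1norm_eq_dotProduct (fun i hi => h₁ i (by simpa [S₁] using hi))
          (fun i hi => h₂ i (by simpa [S₂] using hi))
    _ = U (S₁, S₂) ⬝ᵥ (A *ᵥ v) := by rw [Matrix.mulVec_transpose, Matrix.dotProduct_mulVec]
    _ ≤ l1norm (U (S₁, S₂)) * ‖A *ᵥ v‖ := (le_abs_self _).trans (abs_dotProduct_le _ _)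
    _ ≤ (∑ S, l1norm (U S)) * ‖A *ᵥ v‖ := by
        gcongr
        exact Finset.single_le_sum (fun S _ => l1norm_nonneg (U S)) (Finset.mem_univ _)

end WeakRSP

section Constant

lemma opNormInfToOne_bddAbove {a b : ℕ} (Q : Matrix (Fin a) (Fin b) ℝ) :
    BddAbove {t : ℝ | ∃ x : Fin b → ℝ, linfnorm x ≤ 1 ∧ t = l1norm (Q *ᵥ x)} := by
  refine ⟨∑ i, ∑ j, |Q i j|, ?_⟩
  rintro _ ⟨x, hx, rfl⟩
  refine Finset.sum_le_sum fun i _ => ?_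
  change |∑ j, Q i j * x j| ≤ _
  refine (Finset.abs_sum_le_sum_abs _ _).trans <| Finset.sum_le_sum fun j _ => ?_
  rw [abs_mul]
  exact mul_le_of_le_one_right (abs_nonneg _)
    ((le_ciSup (Set.finite_range fun j => |x j|).bddAbove j).trans hx)

lemma opNormInfToOne_nonneg {a b : ℕ} (Q : Matrix (Fin a) (Fin b) ℝ) : 0 ≤ opNormInfToOne Q :=
  Real.sSup_nonneg fun _ ⟨_, _, ht⟩ => ht ▸ l1norm_nonneg _

lemma opNormInfToOne_pos {a b : ℕ} {Q : Matrix (Fin a) (Fin b) ℝ} (hQ : Q ≠ 0) :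
    0 < opNormInfToOne Q := by
  obtain ⟨i, j, hij⟩ : ∃ i j, Q i j ≠ 0 := by
    by_contra! h
    exact hQ (Matrix.ext h)
  have : Nonempty (Fin b) := ⟨j⟩
  have hsingle : linfnorm (Pi.single j 1 : Fin b → ℝ) ≤ 1 :=
    ciSup_le fun l => by by_cases h : l = j <;> simp [h]
  calc 0 < |Q i j| := abs_pos.2 hij
    _ ≤ l1norm (Q *ᵥ Pi.single j 1) := by
        rw [Matrix.mulVec_single_one]
        exact abs_le_l1norm (Q.col j) i
    _ ≤ opNormInfToOne Q := le_csSup (opNormInfToOne_bddAbove Q) ⟨_, hsingle, rfl⟩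

variable {m n q : ℕ} (M : Matrix (Fin m) (Fin q) ℝ) (A : Matrix (Fin m) (Fin n) ℝ)

lemma cConst_nonneg : 0 ≤ cConst M A :=
  Real.sSup_nonneg fun _ ⟨_, _, _, ht⟩ => ht ▸ opNormInfToOne_nonneg _

lemma cConst_pos (hm : 0 < m) (hA : A.rank = m) (hM : M.rank = m) : 0 < cConst M A := by
  obtain ⟨g, hg, hN⟩ := M.exists_isUnit_submatrix_of_rank_eq (by simpa using hM)
  have hW : IsUnit (A * Aᵀ) := Matrix.mulVec_surjective_iff_isUnit.1 <|
    (A * Aᵀ).mulVec_surjective_of_rank_eq (by simpa [Matrix.rank_self_mul_transpose] using hA)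
  have hA0 : A ≠ 0 := by
    rintro rfl
    simp only [Matrix.rank_zero] at hA
    omega
  have hB : (M.submatrix id g)⁻¹ * (A * Aᵀ)⁻¹ * A ≠ 0 := by
    intro h0
    apply hA0
    calc A = A * Aᵀ * (M.submatrix id g * ((M.submatrix id g)⁻¹ * (A * Aᵀ)⁻¹ * A)) := by
          rw [Matrix.mul_assoc _ _ A, Matrix.mul_nonsing_inv_cancel_left _ _
              ((M.submatrix id g).isUnit_iff_isUnit_det.1 hN),
            Matrix.mul_nonsing_inv_cancel_left _ _ ((A * Aᵀ).isUnit_iff_isUnit_det.1 hW)]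
      _ = 0 := by rw [h0, Matrix.mul_zero, Matrix.mul_zero]
  have hbdd : BddAbove {t : ℝ | ∃ g : Fin m → Fin q, Function.Injective g ∧
      IsUnit (M.submatrix id g) ∧
      t = opNormInfToOne ((M.submatrix id g)⁻¹ * (A * Aᵀ)⁻¹ * A)} :=
    ((Set.finite_range fun g : Fin m → Fin q =>
      opNormInfToOne ((M.submatrix id g)⁻¹ * (A * Aᵀ)⁻¹ * A)).subset
        (by rintro _ ⟨g, -, -, rfl⟩; exact ⟨g, rfl⟩)).bddAbove
  exact (opNormInfToOne_pos hB).trans_le (le_csSup hbdd ⟨g, hg, hN, rfl⟩)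

end Constant

lemma exists_dantzig_minimizer {m n q : ℕ} (A : Matrix (Fin m) (Fin n) ℝ)
    (M : Matrix (Fin m) (Fin q) ℝ) (hA : A.rank = m) (y : Fin m → ℝ) {τ : ℝ} (hτ : 0 ≤ τ)
    {φ : (Fin q → ℝ) → ℝ} (hφ : IsNorm φ) (hcont : Continuous φ) :
    ∃ xstar : Fin n → ℝ, φ (Mᵀ *ᵥ (A *ᵥ xstar - y)) ≤ τ ∧
      ∀ z : Fin n → ℝ, φ (Mᵀ *ᵥ (A *ᵥ z - y)) ≤ τ → l1norm xstar ≤ l1norm z := by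
  obtain ⟨z₀, hz₀⟩ := A.mulVec_surjective_of_rank_eq (by simpa using hA) y
  set s := {z : Fin n → ℝ | φ (Mᵀ *ᵥ (A *ᵥ z - y)) ≤ τ}
  have hs : IsClosed s := isClosed_le (hcont.comp (by fun_prop)) continuous_const
  have hz₀s : z₀ ∈ s := by simp [s, hz₀, hφ.map_zero, hτ]
  have hl1 : Continuous (l1norm (n := n)) :=
    continuous_finsetSum _ fun i _ => (continuous_apply i).abs
  obtain ⟨xstar, hxs, hmin⟩ := hl1.continuousOn.exists_isMinOn' hs hz₀s <|
    ((tendsto_norm_cocompact_atTop.eventually_ge_atTop (l1norm z₀)).mono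
      fun z hz => hz.trans (norm_le_l1norm z)).filter_mono inf_le_left
  exact ⟨xstar, hxs, fun z hz => hmin hz⟩

lemma l1norm_le_of_weakRSP {m n q k : ℕ} {A : Matrix (Fin m) (Fin n) ℝ} (hRSP : WeakRSP A k)
    {M : Matrix (Fin m) (Fin q) ℝ} (hM : M.rank = m) {φ : (Fin q → ℝ) → ℝ} (hφ : IsNorm φ)
    (hdbasis : ∀ i, dualNorm φ (stdBasis i) = 1) (y : Fin m → ℝ) :
    ∃ K > 0, ∀ x : Fin n → ℝ,
      l1norm x ≤ K * (bestKTerm k x + φ (Mᵀ *ᵥ (A *ᵥ x - y)) + 1) := by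
  obtain ⟨Cs, hCs0, hCs⟩ := hRSP.exists_l1norm_le_mul_norm_mulVec
  obtain ⟨CA, hCA0, hCA⟩ := A.exists_norm_mulVec_le
  obtain ⟨CM, hCM0, hCM⟩ := Mᵀ.exists_norm_le_mul_norm_mulVec
    (Mᵀ.mulVec_injective_of_rank_eq (by simpa [Matrix.rank_transpose] using hM))
  refine ⟨1 + Cs * (CA + CM + ‖y‖), by positivity, fun x => ?_⟩
  obtain ⟨u, hu, hxu⟩ := exists_l1norm_sub_lt_bestKTerm k x one_pos
  set σ := bestKTerm k x
  set r := φ (Mᵀ *ᵥ (A *ᵥ x - y))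
  have hσ : 0 ≤ σ := bestKTerm_nonneg k x
  have hr : 0 ≤ r := hφ.nonneg _
  have hres : ‖A *ᵥ x - y‖ ≤ CM * r := (hCM _).trans (by gcongr; exact hφ.norm_le hdbasis _)
  have hAu : ‖A *ᵥ u‖ ≤ CA * (σ + 1) + CM * r + ‖y‖ := by
    have hsplit : A *ᵥ u = (A *ᵥ x - y) + y - A *ᵥ (x - u) := by
      rw [Matrix.mulVec_sub]
      abel
    have hdiff : ‖A *ᵥ (x - u)‖ ≤ CA * (σ + 1) :=
      (hCA _).trans (by gcongr; exact (norm_le_l1norm _).trans hxu.le)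
    rw [hsplit]
    linarith [norm_sub_le ((A *ᵥ x - y) + y) (A *ᵥ (x - u)), norm_add_le (A *ᵥ x - y) y]
  have hu' : l1norm u ≤ Cs * (CA * (σ + 1) + CM * r + ‖y‖) :=
    (hCs u hu).trans (mul_le_mul_of_nonneg_left hAu hCs0)
  calc l1norm x ≤ l1norm (x - u) + l1norm u := by simpa using l1norm_add_le (x - u) u
    _ ≤ (σ + 1) + Cs * (CA * (σ + 1) + CM * r + ‖y‖) := add_le_add hxu.le hu'
    _ ≤ (1 + Cs * (CA + CM + ‖y‖)) * (σ + r + 1) := by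
        nlinarith [mul_nonneg hCs0 hCA0, mul_nonneg hCs0 hCM0, mul_nonneg hCs0 (norm_nonneg y),
          mul_nonneg (mul_nonneg hCs0 hCA0) hr, mul_nonneg (mul_nonneg hCs0 hCM0) hσ,
          mul_nonneg (mul_nonneg hCs0 (norm_nonneg y)) (add_nonneg hσ hr)]

lemma exists_dantzig_minimizer_l2norm_sub_le {m n q k : ℕ} (hmn : m < n)
    {A : Matrix (Fin m) (Fin n) ℝ} (hA : A.rank = m) (hRSP : WeakRSP A k)
    {M : Matrix (Fin m) (Fin q) ℝ} (hM : M.rank = m) (y : Fin m → ℝ) {τ : ℝ} (hτ : 0 < τ)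
    {φ : (Fin q → ℝ) → ℝ} (hφ : IsNorm φ) (hbasis : ∀ i, φ (stdBasis i) = 1)
    (hdbasis : ∀ i, dualNorm φ (stdBasis i) = 1) :
    ∃ xstar : Fin n → ℝ, (φ (Mᵀ *ᵥ (A *ᵥ xstar - y)) ≤ τ ∧
        ∀ z : Fin n → ℝ, φ (Mᵀ *ᵥ (A *ᵥ z - y)) ≤ τ → l1norm xstar ≤ l1norm z) ∧
      ∃ Γ > 0, ∀ x : Fin n → ℝ, l2norm (x - xstar) ≤
        Γ * (2 * bestKTerm k x + cConst M A * τ + cConst M A * φ (Mᵀ *ᵥ (A *ᵥ x - y))) := by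
  rcases Nat.eq_zero_or_pos m with rfl | hm
  · obtain rfl : k = 0 := Nat.eq_zero_of_not_pos fun hk => (hRSP.rows_pos hk hmn).ne rfl
    have hres : ∀ z : Fin n → ℝ, φ (Mᵀ *ᵥ (A *ᵥ z - y)) = 0 := fun z => by
      rw [Subsingleton.elim (A *ᵥ z - y) 0, Matrix.mulVec_zero, hφ.map_zero]
    refine ⟨0, ⟨(hres 0).trans_le hτ.le, fun z _ => by simpa [l1norm] using l1norm_nonneg z⟩,
      1, one_pos, fun x => ?_⟩
    rw [sub_zero, hres, bestKTerm_zero]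
    nlinarith [l2norm_le_l1norm x, l1norm_nonneg x, mul_nonneg (cConst_nonneg M A) hτ.le]
  · obtain ⟨xstar, hopt⟩ := exists_dantzig_minimizer A M hA y hτ.le hφ (hφ.continuous hbasis)
    obtain ⟨K, hK, hbound⟩ := l1norm_le_of_weakRSP hRSP hM hφ hdbasis y
    have hc : 0 < cConst M A := cConst_pos M A hm hA hM
    set c := cConst M A
    set Γ := K + K / c + (K + l1norm xstar) / (c * τ)
    have hxstar := l1norm_nonneg xstar
    have h₁ : 0 ≤ K / c := by positivity
    have h₂ : 0 ≤ (K + l1norm xstar) / (c * τ) := by positivity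
    have hΓ₁ : K ≤ Γ := by linarith
    have hΓ₂ : K ≤ Γ * c :=
      calc K = K / c * c := (div_mul_cancel₀ K hc.ne').symm
        _ ≤ Γ * c := by gcongr; linarith
    have hΓ₃ : K + l1norm xstar ≤ Γ * (c * τ) :=
      calc K + l1norm xstar = (K + l1norm xstar) / (c * τ) * (c * τ) :=
            (div_mul_cancel₀ _ (by positivity)).symm
        _ ≤ Γ * (c * τ) := by gcongr; linarith
    refine ⟨xstar, hopt, Γ, by linarith, fun x => ?_⟩
    have hσ := bestKTerm_nonneg k x
    have hr := hφ.nonneg (Mᵀ *ᵥ (A *ᵥ x - y))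
    calc l2norm (x - xstar) ≤ l1norm x + l1norm xstar :=
          (l2norm_le_l1norm _).trans (l1norm_sub_le _ _)
      _ ≤ K * (bestKTerm k x + φ (Mᵀ *ᵥ (A *ᵥ x - y)) + 1) + l1norm xstar := by
          gcongr
          exact hbound x
      _ ≤ Γ * (2 * bestKTerm k x + c * τ + c * φ (Mᵀ *ᵥ (A *ᵥ x - y))) := by
          nlinarith [mul_le_mul_of_nonneg_right hΓ₁ hσ, mul_le_mul_of_nonneg_right hΓ₂ hr]

theorem nonlinear_DS_stability_general (m n q k : ℕ) (hmn : m < n)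
    (A : Matrix (Fin m) (Fin n) ℝ) (M : Matrix (Fin m) (Fin q) ℝ)
    (hArank : A.rank = m) (hMrank : M.rank = m)
    (y : Fin m → ℝ) (τ : ℝ) (hτ : 0 < τ)
    (φ : (Fin q → ℝ) → ℝ) (hφ : IsNorm φ)
    (hbasis : ∀ i : Fin q, φ (stdBasis i) = 1)
    (hdbasis : ∀ i : Fin q, dualNorm φ (stdBasis i) = 1)
    (hRSP : WeakRSP A k)
    (δ : ℝ) (hδ0 : 0 < δ) :
    ∃ (γ : ℝ) (nhat : ℕ), 0 < γ ∧ 0 < nhat ∧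
      ∀ x : Fin n → ℝ, ∃ xstar : Fin n → ℝ,
        (φ (Mᵀ.mulVec (A.mulVec xstar - y)) ≤ τ ∧
          ∀ z : Fin n → ℝ, φ (Mᵀ.mulVec (A.mulVec z - y)) ≤ τ →
            l1norm xstar ≤ l1norm z) ∧
        l2norm (x - xstar) ≤
          δ + 2 * γ * ((nhat : ℝ) * max (φ (Mᵀ.mulVec (A.mulVec x - y)) - τ) 0
                + 2 * bestKTerm k x + cConst M A * τ
                + cConst M A * φ (Mᵀ.mulVec (A.mulVec x - y))) ∧
        (φ (Mᵀ.mulVec (A.mulVec x - y)) ≤ τ →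
          l2norm (x - xstar) ≤
            δ + 2 * γ * (2 * bestKTerm k x + cConst M A * τ
                  + cConst M A * φ (Mᵀ.mulVec (A.mulVec x - y))) ∧
          l2norm (x - xstar) ≤ δ + 4 * γ * (bestKTerm k x + cConst M A * τ)) := by
  obtain ⟨xstar, hopt, γ, hγ, hbound⟩ :=
    exists_dantzig_minimizer_l2norm_sub_le hmn hArank hRSP hMrank y hτ hφ hbasis hdbasis
  refine ⟨γ, 1, hγ, one_pos, fun x => ⟨xstar, hopt, ?_⟩⟩
  set r := φ (Mᵀ *ᵥ (A *ᵥ x - y))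
  set c := cConst M A
  have hx := hbound x
  have hE : 0 ≤ 2 * bestKTerm k x + c * τ + c * r := by
    have := bestKTerm_nonneg k x
    have := hφ.nonneg (Mᵀ *ᵥ (A *ᵥ x - y))
    have := cConst_nonneg M A
    positivity
  refine ⟨?_, fun hfeas => ⟨?_, ?_⟩⟩
  · nlinarith [mul_nonneg hγ.le (le_max_right (r - τ) 0)]
  · nlinarith
  · nlinarith [mul_nonneg (mul_nonneg hγ.le (cConst_nonneg M A)) (sub_nonneg.2 hfeas)]

/-- Theorem 4.5: stability of the nonlinear Dantzig selector
`min {‖z‖₁ : φ(Mᵀ(Az − y)) ≤ τ}` under the weak RSP of order `k`. -/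
theorem nonlinear_DS_stability (m n q k : ℕ) (hmn : m < n) (hmq : m ≤ q)
    (A : Matrix (Fin m) (Fin n) ℝ) (M : Matrix (Fin m) (Fin q) ℝ)
    (hArank : A.rank = m) (hMrank : M.rank = m)
    (y : Fin m → ℝ) (τ : ℝ) (hτ : 0 < τ)
    (φ : (Fin q → ℝ) → ℝ) (hφ : IsNorm φ)
    (hbasis : ∀ i : Fin q, φ (stdBasis i) = 1)
    (hdbasis : ∀ i : Fin q, dualNorm φ (stdBasis i) = 1)
    (hRSP : WeakRSP A k)
    (δ : ℝ) (hδ0 : 0 < δ) (hδτ : δ < τ) :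
    ∃ (γ : ℝ) (nhat : ℕ), 0 < γ ∧ 0 < nhat ∧
      ∀ x : Fin n → ℝ, ∃ xstar : Fin n → ℝ,
        (φ (Mᵀ.mulVec (A.mulVec xstar - y)) ≤ τ ∧
          ∀ z : Fin n → ℝ, φ (Mᵀ.mulVec (A.mulVec z - y)) ≤ τ →
            l1norm xstar ≤ l1norm z) ∧
        l2norm (x - xstar) ≤
          δ + 2 * γ * ((nhat : ℝ) * max (φ (Mᵀ.mulVec (A.mulVec x - y)) - τ) 0
                + 2 * bestKTerm k x + cConst M A * τ
                + cConst M A * φ (Mᵀ.mulVec (A.mulVec x - y))) ∧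
        (φ (Mᵀ.mulVec (A.mulVec x - y)) ≤ τ →
          l2norm (x - xstar) ≤
            δ + 2 * γ * (2 * bestKTerm k x + cConst M A * τ
                  + cConst M A * φ (Mᵀ.mulVec (A.mulVec x - y))) ∧
          l2norm (x - xstar) ≤ δ + 4 * γ * (bestKTerm k x + cConst M A * τ)) :=
  nonlinear_DS_stability_general m n q k hmn A M hArank hMrank y τ hτ φ hφ hbasis hdbasis hRSP δ hδ0
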